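/- arXiv:1703.04763 — 6 statements merged into one kernel-verified Lean document; each statement's English description precedes it below -/
import Mathlib

section
/- Let X ⊂ H(D) be a Banach space with bounded point evaluations δ_z, v a radial weight, and g ∈ H(D). The integral operator T_g f(z) = ∫_0^z f(w) g'(w) dw is bounded from X to B_v if and only if sup_{z∈D} v(z)|g'(z)|·||δ_z||_{X*} < ∞, and in that case ||T_g|| = sup_{z∈D} v(z)|g'(z)|·||δ_z||. -/
/-
No differentiation under the integral sign is needed: a holomorphic `φ` on a disk about `0` has
a primitive `F` there (Morera), so `∫₀¹ φ(tz) z dt = F z - F 0`, and the derivative of `T_g f`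
is `f g'`. Hence `v z |(T_g f)'(z)| = ‖(v z g'(z)) • δ_z f‖`, and the admissible constants for
`T_g` are exactly the upper bounds of the operator norms `v z |g'(z)| ‖δ_z‖`.
-/

open Metric intervalIntegral

/-- The open unit disk in the complex plane. -/
def UnitDisk : Set ℂ := Metric.ball (0 : ℂ) 1

/-- The integral operator `T_g f (z) = ∫_0^z f(w) g'(w) dw`, the integral being taken along
the segment from `0` to `z`. -/
noncomputable def intOp (g f : ℂ → ℂ) : ℂ → ℂ :=
  fun z => ∫ t in (0:ℝ)..1, (f ((t : ℂ) * z) * deriv g ((t : ℂ) * z)) * z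

open Set

theorem ofReal_mul_mem_ball_zero {r t : ℝ} {z : ℂ} (hz : z ∈ ball (0 : ℂ) r)
    (ht : t ∈ Icc (0 : ℝ) 1) :
    (t : ℂ) * z ∈ ball (0 : ℂ) r := by
  rw [mem_ball_zero_iff] at hz ⊢
  rw [norm_mul, Complex.norm_real, Real.norm_of_nonneg ht.1]
  nlinarith [norm_nonneg z, ht.2]

theorem integral_segment_eq_sub_of_hasDerivAt {F φ : ℂ → ℂ} {z : ℂ}
    (hF : ∀ t ∈ Icc (0 : ℝ) 1, HasDerivAt F (φ (t * z)) (t * z))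
    (hφ : ContinuousOn (fun t : ℝ => φ (t * z)) (Icc 0 1)) :
    ∫ t in (0:ℝ)..1, φ (t * z) * z = F z - F 0 := by
  have hline : ∀ t : ℝ, HasDerivAt (fun s : ℝ => (s : ℂ) * z) z t := fun t => by
    simpa using ((hasDerivAt_id t).ofReal_comp).mul_const z
  simpa using integral_eq_sub_of_hasDerivAt (f := fun t : ℝ => F (t * z)) (a := 0) (b := 1)
    (fun t ht => (hF t (by rwa [uIcc_of_le zero_le_one] at ht)).comp t (hline t))
    ((hφ.mul continuousOn_const).intervalIntegrable_of_Icc zero_le_one)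

theorem hasDerivAt_integral_segment {φ : ℂ → ℂ} {r : ℝ} (hφ : DifferentiableOn ℂ φ (ball 0 r))
    {z : ℂ} (hz : z ∈ ball 0 r) :
    HasDerivAt (fun w => ∫ t in (0:ℝ)..1, φ (t * w) * w) (φ z) z := by
  obtain ⟨F, hF⟩ := hφ.isExactOn_ball
  have hprimitive : ∀ w ∈ ball (0 : ℂ) r, ∫ t in (0:ℝ)..1, φ (t * w) * w = F w - F 0 :=
    fun w hw => integral_segment_eq_sub_of_hasDerivAt
      (fun t ht => hF _ (ofReal_mul_mem_ball_zero hw ht))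
      (hφ.continuousOn.comp (by fun_prop) fun t ht => ofReal_mul_mem_ball_zero hw ht)
  exact ((hF z hz).sub_const (F 0)).congr_of_eventuallyEq
    (Filter.eventually_of_mem (isOpen_ball.mem_nhds hz) hprimitive)

theorem deriv_intOp {g f : ℂ → ℂ} (hg : DifferentiableOn ℂ g UnitDisk)
    (hf : DifferentiableOn ℂ f UnitDisk) {z : ℂ} (hz : z ∈ UnitDisk) :
    deriv (intOp g f) z = f z * deriv g z :=
  (hasDerivAt_integral_segment (hf.mul (hg.analyticOnNhd isOpen_ball).deriv.differentiableOn)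
    hz).deriv

theorem ContinuousLinearMap.setOf_forall_norm_apply_le_eq_upperBounds {ι 𝕜 E F : Type*}
    [NontriviallyNormedField 𝕜] [SeminormedAddCommGroup E] [SeminormedAddCommGroup F]
    [NormedSpace 𝕜 E] [NormedSpace 𝕜 F] (L : ι → E →L[𝕜] F) {S : Set ι} (hS : S.Nonempty) :
    {C : ℝ | 0 ≤ C ∧ ∀ x : E, ∀ i ∈ S, ‖L i x‖ ≤ C * ‖x‖} = upperBounds ((‖L ·‖) '' S) := by
  ext C
  simp only [mem_ofPred_eq, mem_upperBounds, forall_mem_image]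
  refine ⟨fun ⟨hC, hLC⟩ i hi => (L i).opNorm_le_bound hC fun x => hLC x i hi, fun hC => ?_⟩
  obtain ⟨i₀, hi₀⟩ := hS
  exact ⟨(norm_nonneg _).trans (hC hi₀), fun x i hi => (L i).le_of_opNorm_le (hC hi) x⟩

theorem stmt_5_general {X : Type*} [NormedAddCommGroup X] [NormedSpace ℂ X]
    (ι : X →ₗ[ℂ] (ℂ → ℂ))
    (hι_hol : ∀ f : X, DifferentiableOn ℂ (ι f) UnitDisk)
    (δ : ℂ → (X →L[ℂ] ℂ)) (hδ : ∀ z ∈ UnitDisk, ∀ f : X, δ z f = ι f z)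
    (v : ℂ → ℝ)
    (hv_pos : ∀ z ∈ UnitDisk, 0 < v z)
    (g : ℂ → ℂ) (hg : DifferentiableOn ℂ g UnitDisk) :
    ((∃ C : ℝ, 0 ≤ C ∧ ∀ f : X, ∀ z ∈ UnitDisk,
        v z * ‖deriv (intOp g (ι f)) z‖ ≤ C * ‖f‖)
      ↔ ∃ M : ℝ, ∀ z ∈ UnitDisk, v z * ‖deriv g z‖ * ‖δ z‖ ≤ M) ∧
    ((∃ C : ℝ, 0 ≤ C ∧ ∀ f : X, ∀ z ∈ UnitDisk,
        v z * ‖deriv (intOp g (ι f)) z‖ ≤ C * ‖f‖) →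
      sInf {C : ℝ | 0 ≤ C ∧ ∀ f : X, ∀ z ∈ UnitDisk,
          v z * ‖deriv (intOp g (ι f)) z‖ ≤ C * ‖f‖}
        = sSup ((fun z => v z * ‖deriv g z‖ * ‖δ z‖) '' UnitDisk)) := by
  set L : ℂ → X →L[ℂ] ℂ := fun z => ((v z : ℂ) * deriv g z) • δ z
  have hnorm_L : ∀ z ∈ UnitDisk, ‖L z‖ = v z * ‖deriv g z‖ * ‖δ z‖ := fun z hz => by
    rw [norm_smul, norm_mul, Complex.norm_real, Real.norm_of_nonneg (hv_pos z hz).le]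
  have hnorm_L_apply : ∀ f : X, ∀ z ∈ UnitDisk, ‖L z f‖ = v z * ‖deriv (intOp g (ι f)) z‖ :=
    fun f z hz => by
      rw [deriv_intOp hg (hι_hol f) hz, smul_apply, smul_eq_mul, hδ z hz,
        norm_mul, norm_mul, norm_mul, Complex.norm_real, Real.norm_of_nonneg (hv_pos z hz).le]
      ring
  have hadmissible : {C : ℝ | 0 ≤ C ∧ ∀ f : X, ∀ z ∈ UnitDisk,
      v z * ‖deriv (intOp g (ι f)) z‖ ≤ C * ‖f‖} =
      upperBounds ((fun z => v z * ‖deriv g z‖ * ‖δ z‖) '' UnitDisk) := by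
    rw [← image_congr hnorm_L, ← ContinuousLinearMap.setOf_forall_norm_apply_le_eq_upperBounds L
      (S := UnitDisk) ⟨0, mem_ball_self one_pos⟩]
    ext C
    simp +contextual only [mem_ofPred_eq, hnorm_L_apply]
  have hbounded_iff : (∃ C : ℝ, 0 ≤ C ∧ ∀ f : X, ∀ z ∈ UnitDisk,
      v z * ‖deriv (intOp g (ι f)) z‖ ≤ C * ‖f‖) ↔
      BddAbove ((fun z => v z * ‖deriv g z‖ * ‖δ z‖) '' UnitDisk) := by
    rw [BddAbove, ← hadmissible]
    rfl
  refine ⟨hbounded_iff.trans ?_, fun hbounded => ?_⟩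
  · simp only [bddAbove_def, forall_mem_image]
  · rw [hadmissible]
    exact csInf_upperBounds_eq_csSup (hbounded_iff.1 hbounded)
      ⟨_, mem_image_of_mem _ (mem_ball_self one_pos)⟩

/-- Let `X ⊆ H(𝔻)` be a Banach space with bounded point evaluations `δ_z`, `v` a
radial weight and `g` holomorphic on `𝔻`.  The integral operator `T_g` is bounded from `X` to
`B_v` (with seminorm `sup_{z ∈ 𝔻} v z * ‖f' z‖`) iff
`sup_{z ∈ 𝔻} v z * ‖g' z‖ * ‖δ_z‖ < ∞`, and in that case `‖T_g‖` (the least admissible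
bound) equals this supremum. -/
theorem stmt_5 {X : Type*} [NormedAddCommGroup X] [NormedSpace ℂ X] [CompleteSpace X]
    (ι : X →ₗ[ℂ] (ℂ → ℂ)) (hι_inj : Function.Injective ι)
    (hι_hol : ∀ f : X, DifferentiableOn ℂ (ι f) UnitDisk)
    (δ : ℂ → (X →L[ℂ] ℂ)) (hδ : ∀ z ∈ UnitDisk, ∀ f : X, δ z f = ι f z)
    (v : ℂ → ℝ)
    (hv_cont : ContinuousOn v UnitDisk)
    (hv_pos : ∀ z ∈ UnitDisk, 0 < v z)
    (hv_le1 : ∀ z ∈ UnitDisk, v z ≤ 1)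
    (hv_rad : ∀ z ∈ UnitDisk, ∀ w ∈ UnitDisk, ‖z‖ = ‖w‖ → v z = v w)
    (g : ℂ → ℂ) (hg : DifferentiableOn ℂ g UnitDisk) :
    ((∃ C : ℝ, 0 ≤ C ∧ ∀ f : X, ∀ z ∈ UnitDisk,
        v z * ‖deriv (intOp g (ι f)) z‖ ≤ C * ‖f‖)
      ↔ ∃ M : ℝ, ∀ z ∈ UnitDisk, v z * ‖deriv g z‖ * ‖δ z‖ ≤ M) ∧
    ((∃ C : ℝ, 0 ≤ C ∧ ∀ f : X, ∀ z ∈ UnitDisk,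
        v z * ‖deriv (intOp g (ι f)) z‖ ≤ C * ‖f‖) →
      sInf {C : ℝ | 0 ≤ C ∧ ∀ f : X, ∀ z ∈ UnitDisk,
          v z * ‖deriv (intOp g (ι f)) z‖ ≤ C * ‖f‖}
        = sSup ((fun z => v z * ‖deriv g z‖ * ‖δ z‖) '' UnitDisk)) :=
  stmt_5_general ι hι_hol δ hδ v hv_pos g hg
end

section
/- Let g ∈ H(D) and β = γ > 0. The integral operator T_g is bounded from H_β to H_β if and only if g belongs to the Bloch space B, i.e. sup_{z∈D}(1−|z|²)|g'(z)| < ∞. -/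
open Metric intervalIntegral

/-!
Sufficiency: with `T_g f(z) = ∫₀¹ f(tz) g'(tz) z dt`, the two weighted bounds give
`|f(tz) g'(tz)| ≤ ‖f‖ ‖g‖_B (1 - t|z|)^{-(β+1)}`, and integrating in `t` gives
`|T_g f(z)| ≤ ‖f‖ ‖g‖_B (1 - |z|)^{-β} / β`, which the weight `(1 - |z|²)^β` absorbs.

Necessity: `(T_g f)' = f g'`, and Cauchy's estimate on a disk of radius comparable to `1 - |a|²`
bounds `(1 - |a|²)^{β+1} |(T_g f)'(a)|` by a multiple of the weighted norm of `T_g f`. Applied to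
`f_a(w) = (1 - |a|²)^β (1 - ā w)^{-2β}`, which has weighted norm at most `1` and
`|f_a(a)| = (1 - |a|²)^{-β}`, this bounds `(1 - |a|²) |g'(a)|` uniformly in `a`.
-/

open ComplexConjugate

lemma mem_unitDisk {z : ℂ} : z ∈ UnitDisk ↔ ‖z‖ < 1 := mem_ball_zero_iff

lemma zero_mem_unitDisk : (0 : ℂ) ∈ UnitDisk := mem_ball_self one_pos

lemma one_sub_norm_sq_pos {z : ℂ} (hz : z ∈ UnitDisk) : 0 < 1 - ‖z‖ ^ 2 := by
  have := mem_unitDisk.1 hz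
  nlinarith [norm_nonneg z]

theorem integral_comp_ofReal_mul_mul_eq_sub {U : Set ℂ} (hU : StarConvex ℝ 0 U) {φ Φ : ℂ → ℂ}
    (hΦ : ∀ w ∈ U, HasDerivAt Φ (φ w) w) (hφ : ContinuousOn φ U) {z : ℂ} (hz : z ∈ U) :
    ∫ t in (0:ℝ)..1, φ (t * z) * z = Φ z - Φ 0 := by
  have hmem : ∀ t ∈ Set.uIcc (0:ℝ) 1, (t : ℂ) * z ∈ U := fun t ht => by
    rw [Set.uIcc_of_le zero_le_one] at ht
    simpa [Complex.real_smul] using hU.smul_mem hz ht.1 ht.2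
  have hderiv : ∀ t ∈ Set.uIcc (0:ℝ) 1,
      HasDerivAt (fun s : ℝ => Φ (s * z)) (φ (t * z) * z) t := fun t ht => by
    have := (hΦ _ (hmem t ht)).comp (t : ℂ) ((hasDerivAt_id (t : ℂ)).mul_const z)
    simpa using this.comp_ofReal
  have hcont : ContinuousOn (fun t : ℝ => φ (t * z) * z) (Set.uIcc 0 1) :=
    (hφ.comp (by fun_prop) hmem).mul continuousOn_const
  simpa using integral_eq_sub_of_hasDerivAt hderiv hcont.intervalIntegrable

/-- The segment integral is `Φ - Φ 0` for a primitive `Φ` of `φ`, which exists on a disk. -/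
theorem hasDerivAt_integral_comp_ofReal_mul_mul {R : ℝ} {φ : ℂ → ℂ}
    (hφ : DifferentiableOn ℂ φ (ball 0 R)) {z : ℂ} (hz : z ∈ ball 0 R) :
    HasDerivAt (fun z => ∫ t in (0:ℝ)..1, φ (t * z) * z) (φ z) z := by
  obtain ⟨Φ, hΦ⟩ := hφ.isExactOn_ball
  refine ((hΦ z hz).sub_const (Φ 0)).congr_of_eventuallyEq ?_
  filter_upwards [isOpen_ball.mem_nhds hz] with w hw
  exact integral_comp_ofReal_mul_mul_eq_sub
    ((convex_ball 0 R).starConvex (mem_ball_self (pos_of_mem_ball hz))) hΦ hφ.continuousOn hw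

theorem hasDerivAt_intOp {f g : ℂ → ℂ} (hf : DifferentiableOn ℂ f UnitDisk)
    (hg : DifferentiableOn ℂ g UnitDisk) {z : ℂ} (hz : z ∈ UnitDisk) :
    HasDerivAt (intOp g f) (f z * deriv g z) z :=
  hasDerivAt_integral_comp_ofReal_mul_mul (hf.mul (hg.deriv isOpen_ball)) hz

lemma div_four_le_one_sub_norm_sq {a w : ℂ} (ha : a ∈ UnitDisk)
    (hw : w ∈ closedBall a ((1 - ‖a‖ ^ 2) / 4)) : (1 - ‖a‖ ^ 2) / 4 ≤ 1 - ‖w‖ ^ 2 := by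
  have ha' := mem_unitDisk.1 ha
  have hwa : ‖w‖ ≤ ‖a‖ + (1 - ‖a‖ ^ 2) / 4 := by
    rw [mem_closedBall, dist_eq_norm] at hw
    linarith [norm_sub_norm_le w a]
  have hw' : ‖w‖ ≤ (1 + ‖a‖) / 2 := by nlinarith [norm_nonneg a]
  nlinarith [norm_nonneg w, norm_nonneg a]

/-- Cauchy's estimate on the disk of radius `(1 - ‖a‖²) / 4` around `a`. -/
theorem weighted_norm_deriv_le {β K : ℝ} (hβ : 0 ≤ β) {h : ℂ → ℂ}
    (hh : DifferentiableOn ℂ h UnitDisk)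
    (hK : ∀ w ∈ UnitDisk, (1 - ‖w‖ ^ 2) ^ β * ‖h w‖ ≤ K) {a : ℂ} (ha : a ∈ UnitDisk) :
    (1 - ‖a‖ ^ 2) ^ (β + 1) * ‖deriv h a‖ ≤ 4 ^ (β + 1) * K := by
  set s := 1 - ‖a‖ ^ 2
  have hs : 0 < s := one_sub_norm_sq_pos ha
  have hρ : 0 < s / 4 := by positivity
  have hsub : closedBall a (s / 4) ⊆ UnitDisk := fun w hw =>
    mem_unitDisk.2 <| by nlinarith [div_four_le_one_sub_norm_sq ha hw, norm_nonneg w]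
  have hsphere : ∀ w ∈ sphere a (s / 4), ‖h w‖ ≤ K / (s / 4) ^ β := fun w hw => by
    have hw := sphere_subset_closedBall hw
    rw [le_div_iff₀ (by positivity), mul_comm]
    calc (s / 4) ^ β * ‖h w‖ ≤ (1 - ‖w‖ ^ 2) ^ β * ‖h w‖ := by
          gcongr; exact div_four_le_one_sub_norm_sq ha hw
      _ ≤ K := hK w (hsub hw)
  have hcauchy := Complex.norm_deriv_le_of_forall_mem_sphere_norm_le hρ
    (hh.diffContOnCl_ball hsub) hsphere
  calc s ^ (β + 1) * ‖deriv h a‖ ≤ s ^ (β + 1) * (K / (s / 4) ^ β / (s / 4)) := by gcongr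
    _ = 4 ^ (β + 1) * K := by
      rw [div_div, ← Real.rpow_add_one hρ.ne', Real.div_rpow hs.le (by norm_num)]
      field_simp

lemma norm_one_sub_conj_mul_sq (a z : ℂ) :
    ‖1 - conj a * z‖ ^ 2 = (1 - ‖a‖ ^ 2) * (1 - ‖z‖ ^ 2) + ‖a - z‖ ^ 2 := by
  simp only [Complex.sq_norm, Complex.normSq_apply, Complex.sub_re, Complex.sub_im,
    Complex.mul_re, Complex.mul_im, Complex.one_re, Complex.one_im, Complex.conj_re,
    Complex.conj_im]
  ring

lemma one_sub_conj_mul_mem_slitPlane {a w : ℂ} (ha : a ∈ UnitDisk) (hw : w ∈ UnitDisk) :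
    1 - conj a * w ∈ Complex.slitPlane := by
  rw [sub_eq_add_neg]
  apply Complex.mem_slitPlane_of_norm_lt_one
  rw [norm_neg, norm_mul, Complex.norm_conj]
  exact mul_lt_one_of_nonneg_of_lt_one_left (norm_nonneg a) (mem_unitDisk.1 ha)
    (mem_unitDisk.1 hw).le

noncomputable def normalizedKernel (β : ℝ) (a : ℂ) (w : ℂ) : ℂ :=
  ((1 - ‖a‖ ^ 2) ^ β : ℝ) * (1 - conj a * w) ^ ((-(2 * β) : ℝ) : ℂ)

section normalizedKernel

variable {β : ℝ} {a : ℂ}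

lemma differentiableOn_normalizedKernel (ha : a ∈ UnitDisk) :
    DifferentiableOn ℂ (normalizedKernel β a) UnitDisk := fun _ hw =>
  ((((differentiableAt_id.const_mul _).const_sub 1).cpow_const
    (one_sub_conj_mul_mem_slitPlane ha hw)).const_mul _).differentiableWithinAt

lemma norm_normalizedKernel (ha : a ∈ UnitDisk) (w : ℂ) :
    ‖normalizedKernel β a w‖ = (1 - ‖a‖ ^ 2) ^ β * ‖1 - conj a * w‖ ^ (-(2 * β)) := by
  rw [normalizedKernel, norm_mul, Complex.norm_real, Real.norm_of_nonneg
    (Real.rpow_nonneg (one_sub_norm_sq_pos ha).le β), Complex.norm_cpow_real]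

lemma weighted_norm_normalizedKernel_le_one (hβ : 0 ≤ β) (ha : a ∈ UnitDisk) {w : ℂ}
    (hw : w ∈ UnitDisk) : (1 - ‖w‖ ^ 2) ^ β * ‖normalizedKernel β a w‖ ≤ 1 := by
  have hA := one_sub_norm_sq_pos ha
  have hW := one_sub_norm_sq_pos hw
  set d := ‖1 - conj a * w‖
  have hd : 0 < d :=
    norm_pos_iff.2 (Complex.slitPlane_ne_zero (one_sub_conj_mul_mem_slitPlane ha hw))
  have hkey : (1 - ‖a‖ ^ 2) * (1 - ‖w‖ ^ 2) ≤ d ^ 2 := by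
    rw [norm_one_sub_conj_mul_sq]; nlinarith [sq_nonneg ‖a - w‖]
  calc (1 - ‖w‖ ^ 2) ^ β * ‖normalizedKernel β a w‖
      = ((1 - ‖a‖ ^ 2) * (1 - ‖w‖ ^ 2)) ^ β * d ^ (-(2 * β)) := by
        rw [norm_normalizedKernel ha, Real.mul_rpow hA.le hW.le]; ring
    _ ≤ (d ^ 2) ^ β * d ^ (-(2 * β)) := by gcongr
    _ = 1 := by
        rw [← Real.rpow_natCast_mul hd.le, ← Real.rpow_add hd]; norm_num

lemma norm_normalizedKernel_self (ha : a ∈ UnitDisk) :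
    ‖normalizedKernel β a a‖ = (1 - ‖a‖ ^ 2) ^ (-β) := by
  have hA := one_sub_norm_sq_pos ha
  have hbase : 1 - conj a * a = ((1 - ‖a‖ ^ 2 : ℝ) : ℂ) := by
    rw [mul_comm, Complex.mul_conj, Complex.normSq_eq_norm_sq]; push_cast; ring
  rw [norm_normalizedKernel ha, hbase, Complex.norm_real, Real.norm_of_nonneg hA.le,
    ← Real.rpow_add hA]
  ring_nf

end normalizedKernel

lemma one_sub_mul_pos {r t : ℝ} (hr : r < 1) (ht : t ∈ Set.uIcc 0 1) : 0 < 1 - r * t := by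
  rw [Set.uIcc_of_le zero_le_one] at ht
  rcases le_or_gt 0 r with h | h <;> nlinarith [ht.1, ht.2]

theorem integral_mul_one_sub_mul_rpow {β r : ℝ} (hβ : β ≠ 0) (hr : r < 1) :
    ∫ t in (0:ℝ)..1, r * (1 - r * t) ^ (-(β + 1)) = ((1 - r) ^ (-β) - 1) / β := by
  have hsub := mul_integral_comp_sub_mul (f := fun x : ℝ => x ^ (-(β + 1))) (a := 0) (b := 1) r 1
  have hpos : (0:ℝ) ∉ Set.uIcc (1 - r * 1) (1 - r * 0) := by
    rw [Set.mem_uIcc]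
    rintro (h | h) <;> linarith [h.1, h.2]
  rw [integral_const_mul, hsub, integral_rpow (Or.inr ⟨by contrapose! hβ; linarith, hpos⟩)]
  simp only [mul_one, mul_zero, sub_zero, Real.one_rpow]
  rw [show -(β + 1) + 1 = -β by ring, div_neg, ← neg_div, neg_sub]

lemma norm_mul_le_of_weighted_bounds {β S M : ℝ} (hβ : -1 ≤ β) {w x y : ℂ} (hw : w ∈ UnitDisk)
    (hx : (1 - ‖w‖ ^ 2) ^ β * ‖x‖ ≤ S) (hy : (1 - ‖w‖ ^ 2) * ‖y‖ ≤ M) :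
    ‖x * y‖ ≤ S * M * (1 - ‖w‖) ^ (-(β + 1)) := by
  have hq := one_sub_norm_sq_pos hw
  have hxS : ‖x‖ ≤ S * (1 - ‖w‖ ^ 2) ^ (-β) := by
    rw [Real.rpow_neg hq.le, ← div_eq_mul_inv, le_div_iff₀ (by positivity), mul_comm]
    exact hx
  have hyM : ‖y‖ ≤ M * (1 - ‖w‖ ^ 2) ^ (-1 : ℝ) := by
    rw [Real.rpow_neg_one, ← div_eq_mul_inv, le_div_iff₀ hq, mul_comm]
    exact hy
  have hq' : 1 - ‖w‖ ≤ 1 - ‖w‖ ^ 2 := by nlinarith [norm_nonneg w, mem_unitDisk.1 hw]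
  have hS : 0 ≤ S := le_trans (by positivity) hx
  have hM : 0 ≤ M := le_trans (by positivity) hy
  calc ‖x * y‖ ≤ S * (1 - ‖w‖ ^ 2) ^ (-β) * (M * (1 - ‖w‖ ^ 2) ^ (-1 : ℝ)) := by
        rw [norm_mul]; gcongr
    _ = S * M * (1 - ‖w‖ ^ 2) ^ (-(β + 1)) := by
        rw [neg_add, Real.rpow_add hq]; ring
    _ ≤ S * M * (1 - ‖w‖) ^ (-(β + 1)) := by
        refine mul_le_mul_of_nonneg_left (Real.rpow_le_rpow_of_nonpos ?_ hq' (by linarith))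
          (mul_nonneg hS hM)
        linarith [mem_unitDisk.1 hw]

theorem weighted_norm_intOp_le {β S M : ℝ} (hβ : 0 < β) {f g : ℂ → ℂ}
    (hf : ∀ w ∈ UnitDisk, (1 - ‖w‖ ^ 2) ^ β * ‖f w‖ ≤ S)
    (hg : ∀ w ∈ UnitDisk, (1 - ‖w‖ ^ 2) * ‖deriv g w‖ ≤ M) {z : ℂ} (hz : z ∈ UnitDisk) :
    (1 - ‖z‖ ^ 2) ^ β * ‖intOp g f z‖ ≤ 2 ^ β * M / β * S := by
  set r := ‖z‖
  have hr : r < 1 := mem_unitDisk.1 hz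
  have hS : 0 ≤ S := le_trans (by norm_num) (hf 0 zero_mem_unitDisk)
  have hM : 0 ≤ M := le_trans (by norm_num) (hg 0 zero_mem_unitDisk)
  have hpoint : ∀ t ∈ Set.uIcc (0:ℝ) 1, ‖f (t * z) * deriv g (t * z) * z‖ ≤
      S * M * (r * (1 - r * t) ^ (-(β + 1))) := fun t ht => by
    have hnorm : ‖(t : ℂ) * z‖ = r * t := by
      rw [Set.uIcc_of_le zero_le_one] at ht
      rw [norm_mul, Complex.norm_real, Real.norm_of_nonneg ht.1, mul_comm]
    have hmem : (t : ℂ) * z ∈ UnitDisk := mem_unitDisk.2 (by linarith [one_sub_mul_pos hr ht])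
    calc ‖f (t * z) * deriv g (t * z) * z‖ = ‖f (t * z) * deriv g (t * z)‖ * r := norm_mul _ _
      _ ≤ S * M * (1 - ‖(t : ℂ) * z‖) ^ (-(β + 1)) * r := by
          gcongr; exact norm_mul_le_of_weighted_bounds (by linarith) hmem (hf _ hmem) (hg _ hmem)
      _ = S * M * (r * (1 - r * t) ^ (-(β + 1))) := by rw [hnorm]; ring
  have hint : ‖intOp g f z‖ ≤ S * M * (((1 - r) ^ (-β) - 1) / β) := by
    rw [← integral_mul_one_sub_mul_rpow hβ.ne' hr, ← integral_const_mul]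
    refine norm_integral_le_of_norm_le zero_le_one (MeasureTheory.ae_of_all _ fun t ht =>
      hpoint t (Set.Icc_subset_uIcc (Set.Ioc_subset_Icc_self ht))) ?_
    exact (continuousOn_const.mul (continuousOn_const.mul (ContinuousOn.rpow_const (by fun_prop)
      fun t ht => Or.inl (one_sub_mul_pos hr ht).ne'))).intervalIntegrable
  have hr1 : 0 < 1 - r := by linarith
  have hr2 : 0 < 1 - r ^ 2 := one_sub_norm_sq_pos hz
  calc (1 - r ^ 2) ^ β * ‖intOp g f z‖
      ≤ (1 - r ^ 2) ^ β * (S * M * ((1 - r) ^ (-β) / β)) := by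
        refine mul_le_mul_of_nonneg_left (hint.trans ?_) (Real.rpow_nonneg hr2.le β)
        gcongr; linarith
    _ = ((1 - r ^ 2) / (1 - r)) ^ β * M / β * S := by
        rw [Real.rpow_neg hr1.le, Real.div_rpow hr2.le hr1.le]; ring
    _ = (1 + r) ^ β * M / β * S := by
        congr 4; field_simp; ring
    _ ≤ 2 ^ β * M / β * S := by
        gcongr; linarith

/-- For `β > 0` and `g ∈ H(𝔻)`, the integral operator `T_g : H_β → H_β` is
bounded iff `g` belongs to the Bloch space, i.e. `sup_{z ∈ 𝔻} (1 - |z|²) |g' z| < ∞`. -/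
theorem stmt_8 (β : ℝ) (hβ : 0 < β)
    (g : ℂ → ℂ) (hg : DifferentiableOn ℂ g UnitDisk) :
    (∃ C : ℝ, 0 ≤ C ∧ ∀ f : ℂ → ℂ, DifferentiableOn ℂ f UnitDisk →
        BddAbove ((fun z => (1 - ‖z‖ ^ 2) ^ β * ‖f z‖) '' UnitDisk) →
        ∀ z ∈ UnitDisk, (1 - ‖z‖ ^ 2) ^ β * ‖intOp g f z‖ ≤
          C * sSup ((fun w => (1 - ‖w‖ ^ 2) ^ β * ‖f w‖) '' UnitDisk))
    ↔ ∃ M : ℝ, ∀ z ∈ UnitDisk, (1 - ‖z‖ ^ 2) * ‖deriv g z‖ ≤ M := by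
  constructor
  · rintro ⟨C, hC0, hC⟩
    refine ⟨4 ^ (β + 1) * C, fun a ha => ?_⟩
    set f := normalizedKernel β a
    have hf : DifferentiableOn ℂ f UnitDisk := differentiableOn_normalizedKernel ha
    have hf1 : ∀ w ∈ UnitDisk, (1 - ‖w‖ ^ 2) ^ β * ‖f w‖ ≤ 1 :=
      fun w hw => weighted_norm_normalizedKernel_le_one hβ.le ha hw
    have hsup : sSup ((fun w => (1 - ‖w‖ ^ 2) ^ β * ‖f w‖) '' UnitDisk) ≤ 1 :=
      csSup_le (Set.image_nonempty.2 ⟨0, zero_mem_unitDisk⟩) (Set.forall_mem_image.2 hf1)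
    have hTf : ∀ w ∈ UnitDisk, (1 - ‖w‖ ^ 2) ^ β * ‖intOp g f w‖ ≤ C := fun w hw =>
      (hC f hf ⟨1, Set.forall_mem_image.2 hf1⟩ w hw).trans (mul_le_of_le_one_right hC0 hsup)
    have hderiv := weighted_norm_deriv_le hβ.le
      (fun w hw => (hasDerivAt_intOp hf hg hw).differentiableAt.differentiableWithinAt) hTf ha
    rw [(hasDerivAt_intOp hf hg ha).deriv, norm_mul, norm_normalizedKernel_self ha] at hderiv
    calc (1 - ‖a‖ ^ 2) * ‖deriv g a‖
        = (1 - ‖a‖ ^ 2) ^ (β + 1) * ((1 - ‖a‖ ^ 2) ^ (-β) * ‖deriv g a‖) := by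
          rw [← mul_assoc, ← Real.rpow_add (one_sub_norm_sq_pos ha)]; simp
      _ ≤ 4 ^ (β + 1) * C := hderiv
  · rintro ⟨M, hM⟩
    have hM0 : 0 ≤ M := le_trans (by simp) (hM 0 zero_mem_unitDisk)
    exact ⟨2 ^ β * M / β, by positivity, fun f _ hbdd z hz =>
      weighted_norm_intOp_le hβ (fun w hw => le_csSup hbdd ⟨w, hw, rfl⟩) hM hz⟩
end

section
/- Let T : H(D) → H(D) be linear, X ⊂ H(D) a Banach space, and v a typical weight. Then T : X → H_{v,0} is bounded if and only if for each z ∈ D the functional f ↦ Tf(z) belongs to X*, and v(z)·(f ↦ Tf(z)) → 0 in the weak* topology of X* as |z| → 1. -/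
open Metric Filter Topology

/-- The filter of `z` in the plane with `|z| → 1⁻`, used to express boundary limits. -/
noncomputable def bdryFilter : Filter ℂ := Filter.comap (fun z : ℂ => ‖z‖) (nhdsWithin 1 (Set.Iio 1))

/-!
Point evaluations `f ↦ (T f)(z)` on `X` are continuous as soon as `T : X → H_v` is bounded,
because `v > 0`. Conversely, if they are continuous and `v · T f → 0` at the boundary for every
`f`, then each `v · T f` is continuous on the disk and vanishes at the boundary, hence is bounded;
so the functionals `v(z) · (f ↦ (T f)(z))` are pointwise bounded and Banach–Steinhaus makes them
uniformly bounded, which is the boundedness of `T : X → H_v`.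
-/

lemma bdryFilter_hasBasis :
    bdryFilter.HasBasis (fun a : ℝ => a < 1) (fun a => (fun z : ℂ => ‖z‖) ⁻¹' Set.Ioo a 1) :=
  (nhdsLT_basis (1 : ℝ)).comap _

lemma eventually_mem_unitDisk_bdryFilter : ∀ᶠ z in bdryFilter, z ∈ UnitDisk :=
  bdryFilter_hasBasis.eventually_iff.mpr ⟨0, one_pos, fun _ hz => mem_ball_zero_iff.mpr hz.2⟩

lemma exists_norm_le_of_tendsto_bdryFilter {E : Type*} [NormedAddCommGroup E] {u : ℂ → E}
    (hu : ContinuousOn u UnitDisk) (hlim : Tendsto u bdryFilter (𝓝 0)) :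
    ∃ C, ∀ z ∈ UnitDisk, ‖u z‖ ≤ C := by
  have hsmall : ∀ᶠ z in bdryFilter, ‖u z‖ < 1 := by
    simpa using hlim.norm.eventually_lt_const (by simp)
  obtain ⟨a, ha1, ha⟩ := bdryFilter_hasBasis.eventually_iff.mp hsmall
  set b := max a 0
  have hball : closedBall (0 : ℂ) b ⊆ UnitDisk := closedBall_subset_ball (max_lt ha1 one_pos)
  obtain ⟨M, hM⟩ := (isCompact_closedBall (0 : ℂ) b).exists_bound_of_continuousOn (hu.mono hball)
  refine ⟨max M 1, fun z hz => ?_⟩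
  rcases le_or_gt ‖z‖ b with hzb | hzb
  · exact (hM z (mem_closedBall_zero_iff.mpr hzb)).trans (le_max_left _ _)
  · exact (ha ⟨(le_max_left a 0).trans_lt hzb, mem_ball_zero_iff.mp hz⟩).le.trans
      (le_max_right _ _)

lemma ContinuousLinearMap.exists_uniform_bound_of_pointwise_bound {𝕜 E F ι : Type*}
    [NontriviallyNormedField 𝕜] [NormedAddCommGroup E] [NormedSpace 𝕜 E] [CompleteSpace E]
    [NormedAddCommGroup F] [NormedSpace 𝕜 F] {g : ι → E →L[𝕜] F}
    (h : ∀ x, ∃ C, ∀ i, ‖g i x‖ ≤ C) :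
    ∃ C, 0 ≤ C ∧ ∀ i x, ‖g i x‖ ≤ C * ‖x‖ := by
  obtain ⟨C, hC⟩ := banach_steinhaus h
  exact ⟨max C 0, le_max_right _ _, fun i x =>
    (g i).le_of_opNorm_le ((hC i).trans (le_max_left _ _)) x⟩

lemma norm_ofReal_mul_of_nonneg {r : ℝ} (hr : 0 ≤ r) (w : ℂ) : ‖(r : ℂ) * w‖ = r * ‖w‖ := by
  rw [norm_mul, Complex.norm_of_nonneg hr]

lemma tendsto_ofReal_mul_bdryFilter_iff {v : ℂ → ℝ} (hv : ∀ z ∈ UnitDisk, 0 ≤ v z) (F : ℂ → ℂ) :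
    Tendsto (fun z => (v z : ℂ) * F z) bdryFilter (𝓝 0) ↔
      Tendsto (fun z => v z * ‖F z‖) bdryFilter (𝓝 0) := by
  rw [tendsto_zero_iff_norm_tendsto_zero]
  refine tendsto_congr' ?_
  filter_upwards [eventually_mem_unitDisk_bdryFilter] with z hz
  exact norm_ofReal_mul_of_nonneg (hv z hz) (F z)

theorem stmt_9_general {X : Type*} [NormedAddCommGroup X] [NormedSpace ℂ X] [CompleteSpace X]
    (ι : X →ₗ[ℂ] (ℂ → ℂ))
    (hι_hol : ∀ f : X, DifferentiableOn ℂ (ι f) UnitDisk)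
    (T : (ℂ → ℂ) →ₗ[ℂ] (ℂ → ℂ))
    (hT_hol : ∀ f : ℂ → ℂ, DifferentiableOn ℂ f UnitDisk →
      DifferentiableOn ℂ (T f) UnitDisk)
    (v : ℂ → ℝ)
    (hv_cont : ContinuousOn v UnitDisk)
    (hv_pos : ∀ z ∈ UnitDisk, 0 < v z) :
    ((∃ C : ℝ, 0 ≤ C ∧ ∀ f : X, ∀ z ∈ UnitDisk, v z * ‖T (ι f) z‖ ≤ C * ‖f‖) ∧
      ∀ f : X, Tendsto (fun z => v z * ‖T (ι f) z‖) bdryFilter (nhds 0))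
    ↔ ((∀ z ∈ UnitDisk, ∃ φ : X →L[ℂ] ℂ, ∀ f : X, φ f = T (ι f) z) ∧
       ∀ f : X, Tendsto (fun z => (v z : ℂ) * T (ι f) z) bdryFilter (nhds 0)) := by
  have hv_nonneg : ∀ z ∈ UnitDisk, 0 ≤ v z := fun z hz => (hv_pos z hz).le
  simp only [tendsto_ofReal_mul_bdryFilter_iff hv_nonneg]
  refine and_congr_left fun hlim => ⟨fun ⟨C, _, hC⟩ z hz => ?_, fun heval => ?_⟩
  · refine ⟨((LinearMap.proj z).comp (T.comp ι)).mkContinuous (C / v z) fun f => ?_,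
      fun f => rfl⟩
    rw [div_mul_eq_mul_div, le_div_iff₀ (hv_pos z hz), mul_comm]
    exact hC f z hz
  · choose φ hφ using heval
    let g : UnitDisk → X →L[ℂ] ℂ := fun z => (v z : ℂ) • φ z z.2
    have hg : ∀ z f, ‖g z f‖ = v z * ‖T (ι f) z‖ := fun z f => by
      rw [FunLike.coe_smul, Pi.smul_apply, smul_eq_mul, hφ,
        norm_ofReal_mul_of_nonneg (hv_nonneg z z.2)]
    have hbdd : ∀ f, ∃ C, ∀ z, ‖g z f‖ ≤ C := fun f => by
      have hcont : ContinuousOn (fun z => (v z : ℂ) * T (ι f) z) UnitDisk :=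
        (Complex.continuous_ofReal.comp_continuousOn hv_cont).mul
          (hT_hol _ (hι_hol f)).continuousOn
      obtain ⟨C, hC⟩ := exists_norm_le_of_tendsto_bdryFilter hcont
        ((tendsto_ofReal_mul_bdryFilter_iff hv_nonneg _).mpr (hlim f))
      exact ⟨C, fun z => by rw [hg, ← norm_ofReal_mul_of_nonneg (hv_nonneg z z.2)]; exact hC z z.2⟩
    obtain ⟨C, hC0, hC⟩ := ContinuousLinearMap.exists_uniform_bound_of_pointwise_bound hbdd
    exact ⟨C, hC0, fun f z hz => hg ⟨z, hz⟩ f ▸ hC ⟨z, hz⟩ f⟩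

/-- Let `T` be a linear transformation of `H(𝔻)`, `X ⊆ H(𝔻)` a Banach space and
`v` a typical weight.  Then `T : X → H_{v,0}` is bounded iff each functional `f ↦ (T f)(z)`
belongs to `X*` and `v z * (f ↦ (T f)(z)) → 0` in the weak* topology of `X*` as `|z| → 1`. -/
theorem stmt_9 {X : Type*} [NormedAddCommGroup X] [NormedSpace ℂ X] [CompleteSpace X]
    (ι : X →ₗ[ℂ] (ℂ → ℂ)) (hι_inj : Function.Injective ι)
    (hι_hol : ∀ f : X, DifferentiableOn ℂ (ι f) UnitDisk)
    (T : (ℂ → ℂ) →ₗ[ℂ] (ℂ → ℂ))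
    (hT_hol : ∀ f : ℂ → ℂ, DifferentiableOn ℂ f UnitDisk →
      DifferentiableOn ℂ (T f) UnitDisk)
    (v : ℂ → ℝ)
    (hv_cont : ContinuousOn v UnitDisk)
    (hv_pos : ∀ z ∈ UnitDisk, 0 < v z)
    (hv_le1 : ∀ z ∈ UnitDisk, v z ≤ 1)
    (hv_rad : ∀ z ∈ UnitDisk, ∀ w ∈ UnitDisk, ‖z‖ = ‖w‖ → v z = v w)
    (hv_mono : ∀ z ∈ UnitDisk, ∀ w ∈ UnitDisk, ‖z‖ ≤ ‖w‖ → v w ≤ v z)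
    (hv_lim : Tendsto v bdryFilter (nhds 0)) :
    ((∃ C : ℝ, 0 ≤ C ∧ ∀ f : X, ∀ z ∈ UnitDisk, v z * ‖T (ι f) z‖ ≤ C * ‖f‖) ∧
      ∀ f : X, Tendsto (fun z => v z * ‖T (ι f) z‖) bdryFilter (nhds 0))
    ↔ ((∀ z ∈ UnitDisk, ∃ φ : X →L[ℂ] ℂ, ∀ f : X, φ f = T (ι f) z) ∧
       ∀ f : X, Tendsto (fun z => (v z : ℂ) * T (ι f) z) bdryFilter (nhds 0)) :=
  stmt_9_general ι hι_hol T hT_hol v hv_cont hv_pos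
end

section
/- Let X ⊂ H(D) be a Banach space with bounded point evaluations δ_z, v a typical weight, u ∈ H(D), and φ : D → D holomorphic. The weighted composition operator W_{u,φ} is bounded from X to H_{v,0} if and only if v(z)u(z)δ_{φ(z)} → 0 in the weak* topology of X* as |z| → 1. -/
/-!
The forward direction is immediate, since on the disk `|v z u z δ_{φ z} f| = v z |u z f(φ z)|`.
Conversely, for each `f` the function `z ↦ v z |u z f(φ z)|` is continuous on the disk and tends
to `0` at the boundary, hence is bounded on the disk. So the functionals `v z u z δ_{φ z}` are
pointwise bounded on the Banach space `X`, and the uniform boundedness principle bounds their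
norms uniformly, which is the boundedness of `W_{u,φ}`.
-/

open Metric Filter Topology

lemma ContinuousOn.exists_bound_of_tendsto_bdryFilter {E : Type*} [SeminormedAddCommGroup E]
    {g : ℂ → E} (hg : ContinuousOn g UnitDisk) {a : E} (hlim : Tendsto g bdryFilter (𝓝 a)) :
    ∃ C, ∀ z ∈ UnitDisk, ‖g z‖ ≤ C := by
  have hsmall : {z | ‖g z‖ < ‖a‖ + 1} ∈ bdryFilter :=
    hlim.norm.eventually (eventually_lt_nhds (lt_add_one ‖a‖))
  obtain ⟨s, hs, hsub⟩ := mem_comap.mp hsmall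
  obtain ⟨l, hl, hIoo⟩ := mem_nhdsLT_iff_exists_Ioo_subset.mp hs
  set r := max l 0
  have hball : closedBall (0 : ℂ) r ⊆ UnitDisk := closedBall_subset_ball (max_lt hl one_pos)
  obtain ⟨M, hM⟩ := (isCompact_closedBall 0 r).exists_bound_of_continuousOn (hg.mono hball)
  refine ⟨max M (‖a‖ + 1), fun z hz => ?_⟩
  rcases le_or_gt ‖z‖ r with hzr | hzr
  · exact (hM z (mem_closedBall_zero_iff.mpr hzr)).trans (le_max_left _ _)
  · have hz_annulus : ‖z‖ ∈ Set.Ioo l 1 :=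
      ⟨(le_max_left l 0).trans_lt hzr, mem_ball_zero_iff.mp hz⟩
    exact (hsub (hIoo hz_annulus)).le.trans (le_max_right _ _)

lemma exists_norm_apply_le_mul_norm_of_pointwise_bounded {ι 𝕜 E F : Type*}
    [NontriviallyNormedField 𝕜] [SeminormedAddCommGroup E] [NormedSpace 𝕜 E] [CompleteSpace E]
    [SeminormedAddCommGroup F] [NormedSpace 𝕜 F] {T : ι → E →L[𝕜] F}
    (h : ∀ x, ∃ C, ∀ i, ‖T i x‖ ≤ C) : ∃ C, 0 ≤ C ∧ ∀ i x, ‖T i x‖ ≤ C * ‖x‖ := by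
  obtain ⟨C, hC⟩ := banach_steinhaus h
  refine ⟨max C 0, le_max_right _ _, fun i x => (T i).le_opNorm x |>.trans ?_⟩
  gcongr
  exact (hC i).trans (le_max_left _ _)

theorem stmt_10_general {X : Type*} [NormedAddCommGroup X] [NormedSpace ℂ X] [CompleteSpace X]
    (ι : X →ₗ[ℂ] (ℂ → ℂ))
    (hι_hol : ∀ f : X, DifferentiableOn ℂ (ι f) UnitDisk)
    (δ : ℂ → (X →L[ℂ] ℂ)) (hδ : ∀ z ∈ UnitDisk, ∀ f : X, δ z f = ι f z)
    (v : ℂ → ℝ)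
    (hv_cont : ContinuousOn v UnitDisk)
    (hv_pos : ∀ z ∈ UnitDisk, 0 < v z)
    (u : ℂ → ℂ) (hu : DifferentiableOn ℂ u UnitDisk)
    (φ : ℂ → ℂ) (hφ_hol : DifferentiableOn ℂ φ UnitDisk)
    (hφ_maps : Set.MapsTo φ UnitDisk UnitDisk) :
    ((∃ C : ℝ, 0 ≤ C ∧ ∀ f : X, ∀ z ∈ UnitDisk, v z * ‖u z * ι f (φ z)‖ ≤ C * ‖f‖) ∧
      ∀ f : X, Tendsto (fun z => v z * ‖u z * ι f (φ z)‖) bdryFilter (nhds 0))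
    ↔ ∀ f : X, Tendsto (fun z => (v z : ℂ) * u z * δ (φ z) f) bdryFilter (nhds 0) := by
  have hnorm : ∀ f, ∀ z ∈ UnitDisk, ‖(v z : ℂ) * u z * δ (φ z) f‖ = v z * ‖u z * ι f (φ z)‖ := by
    intro f z hz
    rw [hδ (φ z) (hφ_maps hz) f, mul_assoc, norm_mul, Complex.norm_real,
      Real.norm_of_nonneg (hv_pos z hz).le]
  have hlim_iff : ∀ f, Tendsto (fun z => v z * ‖u z * ι f (φ z)‖) bdryFilter (𝓝 0) ↔
      Tendsto (fun z => (v z : ℂ) * u z * δ (φ z) f) bdryFilter (𝓝 0) := fun f => by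
    rw [tendsto_zero_iff_norm_tendsto_zero (f := fun z => (v z : ℂ) * u z * δ (φ z) f)]
    exact tendsto_congr' (eventually_mem_unitDisk_bdryFilter.mono fun z hz => (hnorm f z hz).symm)
  refine ⟨fun h f => (hlim_iff f).mp (h.2 f), fun h => ⟨?_, fun f => (hlim_iff f).mpr (h f)⟩⟩
  let T : UnitDisk → X →L[ℂ] ℂ := fun z => ((v z : ℂ) * u z) • δ (φ z)
  have hT : ∀ z f, ‖T z f‖ = v z * ‖u z * ι f (φ z)‖ := fun z f => by
    rw [← hnorm f z z.2, smul_apply, smul_eq_mul]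
  have hT_bdd : ∀ f, ∃ C, ∀ z, ‖T z f‖ ≤ C := fun f => by
    have hcont : ContinuousOn (fun z => v z * ‖u z * ι f (φ z)‖) UnitDisk :=
      hv_cont.mul (hu.continuousOn.mul
        ((hι_hol f).continuousOn.comp hφ_hol.continuousOn hφ_maps)).norm
    obtain ⟨C, hC⟩ := hcont.exists_bound_of_tendsto_bdryFilter ((hlim_iff f).mpr (h f))
    exact ⟨C, fun z => (hT z f).symm ▸ (le_abs_self _).trans (hC z z.2)⟩
  obtain ⟨C, hC0, hC⟩ := exists_norm_apply_le_mul_norm_of_pointwise_bounded hT_bdd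
  exact ⟨C, hC0, fun f z hz => hT ⟨z, hz⟩ f ▸ hC ⟨z, hz⟩ f⟩

/-- Let `X ⊆ H(𝔻)` be a Banach space with bounded point evaluations `δ_z`, `v` a
typical weight, `u ∈ H(𝔻)`, and `φ : 𝔻 → 𝔻` holomorphic.  The weighted composition operator
`W_{u,φ}` is bounded from `X` to `H_{v,0}` iff `v z · u z · δ_{φ z} → 0` in the weak*
topology of `X*` as `|z| → 1`. -/
theorem stmt_10 {X : Type*} [NormedAddCommGroup X] [NormedSpace ℂ X] [CompleteSpace X]
    (ι : X →ₗ[ℂ] (ℂ → ℂ)) (hι_inj : Function.Injective ι)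
    (hι_hol : ∀ f : X, DifferentiableOn ℂ (ι f) UnitDisk)
    (δ : ℂ → (X →L[ℂ] ℂ)) (hδ : ∀ z ∈ UnitDisk, ∀ f : X, δ z f = ι f z)
    (v : ℂ → ℝ)
    (hv_cont : ContinuousOn v UnitDisk)
    (hv_pos : ∀ z ∈ UnitDisk, 0 < v z)
    (hv_le1 : ∀ z ∈ UnitDisk, v z ≤ 1)
    (hv_rad : ∀ z ∈ UnitDisk, ∀ w ∈ UnitDisk, ‖z‖ = ‖w‖ → v z = v w)
    (hv_mono : ∀ z ∈ UnitDisk, ∀ w ∈ UnitDisk, ‖z‖ ≤ ‖w‖ → v w ≤ v z)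
    (hv_lim : Tendsto v bdryFilter (nhds 0))
    (u : ℂ → ℂ) (hu : DifferentiableOn ℂ u UnitDisk)
    (φ : ℂ → ℂ) (hφ_hol : DifferentiableOn ℂ φ UnitDisk)
    (hφ_maps : Set.MapsTo φ UnitDisk UnitDisk) :
    ((∃ C : ℝ, 0 ≤ C ∧ ∀ f : X, ∀ z ∈ UnitDisk, v z * ‖u z * ι f (φ z)‖ ≤ C * ‖f‖) ∧
      ∀ f : X, Tendsto (fun z => v z * ‖u z * ι f (φ z)‖) bdryFilter (nhds 0))
    ↔ ∀ f : X, Tendsto (fun z => (v z : ℂ) * u z * δ (φ z) f) bdryFilter (nhds 0) :=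
  stmt_10_general ι hι_hol δ hδ v hv_cont hv_pos u hu φ hφ_hol hφ_maps
end

section
/- Let T be an intrinsic operator, X an initial space, and suppose T : X → H_v is bounded. Then T : X → H_v is compact if and only if the set {v(z)·T* K_z : z ∈ D} is relatively norm-compact in X*, where K_z is the point evaluation functional on H_v. -/
open Metric Filter Topology

/-!
Put `ψ z = v z • K z`. The hypotheses on the norm of `H_v` say that these functionals lie in the
unit ball of `H_v*` and norm `H_v`: `‖g‖ = sup_z ‖ψ z g‖`. The set in question is
`{ψ z ∘ S : z ∈ 𝔻}`.

If `S` is compact, then up to `ε` a functional of norm `≤ 1` composed with `S` is determined by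
its values on a finite `ε`-net of `S(B_X)`, and a bounded set of such value vectors in a
finite-dimensional space is totally bounded.

Conversely, a bounded sequence in `X` has a subsequence `u_k → f` locally uniformly on `𝔻`, so,
`T` being intrinsic, `ψ z (S u_k) → ψ z (S f)` for every `z`. On a totally bounded set of
functionals this pointwise convergence is uniform, and uniform convergence over a norming set is
norm convergence: `S u_k → S f`.
-/

theorem isCompact_closure_of_subseq_tendsto {α : Type*} [PseudoMetricSpace α] {s : Set α}
    (h : ∀ u : ℕ → α, (∀ n, u n ∈ s) →
      ∃ a, ∃ σ : ℕ → ℕ, StrictMono σ ∧ Tendsto (u ∘ σ) atTop (𝓝 a)) :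
    IsCompact (closure s) := by
  refine IsSeqCompact.isCompact fun x hx => ?_
  choose u hus hxu using fun n =>
    Metric.mem_closure_iff.1 (hx n) (1 / (n + 1)) Nat.one_div_pos_of_nat
  obtain ⟨a, σ, hσ, hua⟩ := h u hus
  have hdist : Tendsto (fun k => dist (u (σ k)) (x (σ k))) atTop (𝓝 0) :=
    squeeze_zero (fun _ => dist_nonneg) (fun k => (dist_comm _ _).trans_le (hxu (σ k)).le)
      (tendsto_one_div_add_atTop_nhds_zero_nat.comp hσ.tendsto_atTop)
  exact ⟨a, mem_closure_of_tendsto hua (.of_forall fun k => hus (σ k)), σ, hσ,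
    hua.congr_dist hdist⟩

section NormingFunctionals

variable {𝕜 X Y F : Type*} [RCLike 𝕜]
  [NormedAddCommGroup X] [NormedSpace 𝕜 X] [NormedAddCommGroup Y] [NormedSpace 𝕜 Y]
  [NormedAddCommGroup F] [NormedSpace 𝕜 F]

theorem ContinuousLinearMap.norm_comp_le_of_net {χ : Y →L[𝕜] F} {S : X →L[𝕜] Y} {t : Set Y}
    {ε δ : ℝ} (hε : 0 ≤ ε) (hδ : 0 ≤ δ) (ht : S '' closedBall 0 1 ⊆ ⋃ y ∈ t, ball y ε)
    (hχ : ∀ y ∈ t, ‖χ y‖ ≤ δ) : ‖χ.comp S‖ ≤ ‖χ‖ * ε + δ := by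
  refine opNorm_le_of_unit_norm (by positivity) fun x hx => ?_
  obtain ⟨y, hy, hxy⟩ := Set.mem_iUnion₂.1 (ht ⟨x, mem_closedBall_zero_iff.2 hx.le, rfl⟩)
  calc ‖χ (S x)‖ = ‖χ (S x - y) + χ y‖ := by rw [map_sub, sub_add_cancel]
    _ ≤ ‖χ‖ * ‖S x - y‖ + δ := norm_add_le_of_le (χ.le_opNorm _) (hχ y hy)
    _ ≤ ‖χ‖ * ε + δ := by gcongr; exact (mem_ball_iff_norm.1 hxy).le

theorem IsCompactOperator.totallyBounded_image_comp [ProperSpace F] {S : X →L[𝕜] Y}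
    (hS : IsCompactOperator S) {A : Set (Y →L[𝕜] F)} (hA : Bornology.IsBounded A) :
    TotallyBounded ((fun φ => φ.comp S) '' A) := by
  obtain ⟨C, hC, hAC⟩ := hA.exists_pos_norm_le
  refine Metric.totallyBounded_iff.2 fun ε hε => ?_
  obtain ⟨t, ht, hnet⟩ := Metric.totallyBounded_iff.1
    (hS.isCompact_closure_image_closedBall 1).totallyBounded (ε / (4 * C)) (by positivity)
  have := ht.fintype
  let G : (Y →L[𝕜] F) →L[𝕜] (t → F) :=
    ContinuousLinearMap.pi fun y => ContinuousLinearMap.apply 𝕜 F (y : Y)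
  have hGA : TotallyBounded (G '' A) :=
    (G.lipschitz.isBounded_image hA).isCompact_closure.totallyBounded.subset subset_closure
  obtain ⟨A₀, hA₀A, hA₀, hcover⟩ : ∃ A₀ ⊆ A, A₀.Finite ∧ G '' A ⊆ ⋃ φ ∈ G '' A₀, ball φ (ε / 4) :=
    Set.exists_subset_image_finite_and.1 (finite_approx_of_totallyBounded hGA _ (by positivity))
  refine ⟨(fun φ => φ.comp S) '' A₀, hA₀.image _, ?_⟩
  rintro - ⟨φ, hφ, rfl⟩
  obtain ⟨-, ⟨φ₀, hφ₀, rfl⟩, hφφ₀⟩ := Set.mem_iUnion₂.1 (hcover ⟨φ, hφ, rfl⟩)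
  refine Set.mem_iUnion₂.2 ⟨_, ⟨φ₀, hφ₀, rfl⟩, ?_⟩
  have hnear : ∀ y ∈ t, ‖(φ - φ₀) y‖ ≤ ε / 4 := fun y hy =>
    (norm_le_pi_norm (G φ - G φ₀) ⟨y, hy⟩).trans (mem_ball_iff_norm.1 hφφ₀).le
  rw [mem_ball_iff_norm, ← ContinuousLinearMap.sub_comp]
  calc ‖(φ - φ₀).comp S‖ ≤ ‖φ - φ₀‖ * (ε / (4 * C)) + ε / 4 :=
        ContinuousLinearMap.norm_comp_le_of_net (by positivity) (by positivity)
          (subset_closure.trans hnet) hnear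
    _ ≤ (C + C) * (ε / (4 * C)) + ε / 4 := by
        gcongr; exact norm_sub_le_of_le (hAC φ hφ) (hAC φ₀ (hA₀A hφ₀))
    _ < ε := by field_simp; linarith

theorem TotallyBounded.tendstoUniformlyOn_apply {ι : Type*} {l : Filter ι}
    {Φ : Set (X →L[𝕜] F)} (hΦ : TotallyBounded Φ) {u : ι → X} {x : X} {R : ℝ}
    (hR : ∀ i, ‖u i - x‖ ≤ R) (h : ∀ φ ∈ Φ, Tendsto (fun i => φ (u i)) l (𝓝 (φ x))) :
    TendstoUniformlyOn (fun i φ => φ (u i)) (fun φ => φ x) l Φ := by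
  refine Metric.tendstoUniformlyOn_iff.2 fun ε hε => ?_
  obtain ⟨t, htΦ, ht, hcover⟩ :=
    finite_approx_of_totallyBounded hΦ (ε / (2 * (|R| + 1))) (by positivity)
  have hnet : ∀ᶠ i in l, ∀ ψ ∈ t, ‖ψ (u i - x)‖ < ε / 2 := by
    refine ht.eventually_all.2 fun ψ hψ => ?_
    have := (tendsto_iff_norm_sub_tendsto_zero.1 (h ψ (htΦ hψ))).eventually
      (gt_mem_nhds (half_pos hε))
    simpa only [map_sub] using this
  filter_upwards [hnet] with i hi φ hφ
  obtain ⟨ψ, hψ, hφψ⟩ := Set.mem_iUnion₂.1 (hcover hφ)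
  have hRabs : ‖u i - x‖ ≤ |R| + 1 := by linarith [hR i, le_abs_self R]
  rw [dist_eq_norm', ← map_sub]
  calc ‖φ (u i - x)‖ = ‖(φ - ψ) (u i - x) + ψ (u i - x)‖ := by
        rw [sub_apply, sub_add_cancel]
    _ ≤ ‖φ - ψ‖ * ‖u i - x‖ + ‖ψ (u i - x)‖ := norm_add_le_of_le ((φ - ψ).le_opNorm _) le_rfl
    _ < ε / (2 * (|R| + 1)) * (|R| + 1) + ε / 2 := by
        refine add_lt_add_of_le_of_lt ?_ (hi ψ hψ)
        exact mul_le_mul (mem_ball_iff_norm.1 hφψ).le hRabs (norm_nonneg _) (by positivity)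
    _ = ε := by field_simp; ring

theorem tendsto_apply_of_totallyBounded_image_comp {Ψ : Set (Y →L[𝕜] F)}
    (hΨ : ∀ y : Y, ∀ C : ℝ, 0 ≤ C → (∀ ψ ∈ Ψ, ‖ψ y‖ ≤ C) → ‖y‖ ≤ C) {S : X →L[𝕜] Y}
    (hS : TotallyBounded ((fun ψ => ψ.comp S) '' Ψ)) {ι : Type*} {l : Filter ι} {u : ι → X}
    {x : X} {R : ℝ} (hR : ∀ i, ‖u i - x‖ ≤ R)
    (h : ∀ ψ ∈ Ψ, Tendsto (fun i => ψ (S (u i))) l (𝓝 (ψ (S x)))) :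
    Tendsto (fun i => S (u i)) l (𝓝 (S x)) := by
  have hunif := hS.tendstoUniformlyOn_apply hR (by rintro - ⟨ψ, hψ, rfl⟩; exact h ψ hψ)
  refine Metric.tendsto_nhds.2 fun ε hε => ?_
  filter_upwards [Metric.tendstoUniformlyOn_iff.1 hunif _ (half_pos hε)] with i hi
  rw [dist_eq_norm, ← map_sub]
  refine (hΨ _ _ (half_pos hε).le fun ψ hψ => ?_).trans_lt (half_lt_self hε)
  simpa only [dist_eq_norm', ContinuousLinearMap.comp_apply, map_sub] using (hi _ ⟨ψ, hψ, rfl⟩).le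

theorem isCompactOperator_of_totallyBounded_image_comp {Ψ : Set (Y →L[𝕜] F)}
    (hΨ : ∀ y : Y, ∀ C : ℝ, 0 ≤ C → (∀ ψ ∈ Ψ, ‖ψ y‖ ≤ C) → ‖y‖ ≤ C) {S : X →L[𝕜] Y}
    (hS : TotallyBounded ((fun ψ => ψ.comp S) '' Ψ))
    (hsub : ∀ u : ℕ → X, (∀ n, ‖u n‖ ≤ 1) → ∃ x, ∃ σ : ℕ → ℕ, StrictMono σ ∧
      ∀ ψ ∈ Ψ, Tendsto (fun k => ψ (S (u (σ k)))) atTop (𝓝 (ψ (S x)))) :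
    IsCompactOperator S := by
  refine (isCompactOperator_iff_isCompact_closure_image_closedBall (S : X →ₗ[𝕜] Y) one_pos).2
    (isCompact_closure_of_subseq_tendsto fun y hy => ?_)
  choose u hu hSu using hy
  obtain ⟨x, σ, hσ, hconv⟩ := hsub u fun n => mem_closedBall_zero_iff.1 (hu n)
  have hR : ∀ k, ‖u (σ k) - x‖ ≤ 1 + ‖x‖ := fun k =>
    (norm_sub_le _ _).trans (by linarith [mem_closedBall_zero_iff.1 (hu (σ k))])
  refine ⟨S x, σ, hσ, ?_⟩
  exact (tendsto_apply_of_totallyBounded_image_comp hΨ hS hR hconv).congr fun k => hSu (σ k)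

end NormingFunctionals

theorem stmt_12_general {X Hv : Type*}
    [NormedAddCommGroup X] [NormedSpace ℂ X]
    [NormedAddCommGroup Hv] [NormedSpace ℂ Hv]
    (v : ℂ → ℝ)
    (hv_pos : ∀ z ∈ UnitDisk, 0 < v z)
    (ιX : X →ₗ[ℂ] (ℂ → ℂ))
    (hιX_hol : ∀ f : X, DifferentiableOn ℂ (ιX f) UnitDisk)
    (hX_ball : ∀ u : ℕ → X, (∀ n, ‖u n‖ ≤ 1) →
      ∃ (f : X) (σ : ℕ → ℕ), StrictMono σ ∧ ‖f‖ ≤ 1 ∧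
        TendstoLocallyUniformlyOn (fun k => ιX (u (σ k))) (ιX f) atTop UnitDisk)
    (j : Hv →ₗ[ℂ] (ℂ → ℂ))
    (hj_le : ∀ (g : Hv), ∀ z ∈ UnitDisk, v z * ‖j g z‖ ≤ ‖g‖)
    (hj_norm : ∀ (g : Hv) (C : ℝ), 0 ≤ C → (∀ z ∈ UnitDisk, v z * ‖j g z‖ ≤ C) → ‖g‖ ≤ C)
    (K : ℂ → (Hv →L[ℂ] ℂ)) (hK : ∀ z ∈ UnitDisk, ∀ g : Hv, K z g = j g z)
    (T : (ℂ → ℂ) →ₗ[ℂ] (ℂ → ℂ))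
    (hT_intr : ∀ (F : ℕ → (ℂ → ℂ)) (f : ℂ → ℂ),
      (∀ n, DifferentiableOn ℂ (F n) UnitDisk) → DifferentiableOn ℂ f UnitDisk →
      TendstoLocallyUniformlyOn F f atTop UnitDisk →
      TendstoLocallyUniformlyOn (fun n => T (F n)) (T f) atTop UnitDisk)
    (S : X →L[ℂ] Hv) (hS : ∀ f : X, ∀ z ∈ UnitDisk, j (S f) z = T (ιX f) z) :
    IsCompactOperator S ↔
      IsCompact (closure ((fun z => ((v z : ℂ) • (K z).comp S : X →L[ℂ] ℂ)) '' UnitDisk)) := by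
  set ψ : ℂ → (Hv →L[ℂ] ℂ) := fun z => (v z : ℂ) • K z
  have hψ : ∀ z ∈ UnitDisk, ∀ g, ‖ψ z g‖ = v z * ‖j g z‖ := fun z hz g => by
    simp [ψ, hK z hz, abs_of_pos (hv_pos z hz)]
  have hψS : ∀ z ∈ UnitDisk, ∀ x, ψ z (S x) = v z * T (ιX x) z := fun z hz x => by
    simp [ψ, hK z hz, hS x z hz]
  have hbdd : Bornology.IsBounded (ψ '' UnitDisk) := by
    refine isBounded_iff_forall_norm_le.2 ⟨1, ?_⟩
    rintro - ⟨z, hz, rfl⟩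
    exact (ψ z).opNorm_le_bound zero_le_one fun g => by rw [hψ z hz, one_mul]; exact hj_le g z hz
  have hnorming : ∀ g : Hv, ∀ C : ℝ, 0 ≤ C → (∀ φ ∈ ψ '' UnitDisk, ‖φ g‖ ≤ C) → ‖g‖ ≤ C :=
    fun g C hC h => hj_norm g C hC fun z hz => hψ z hz g ▸ h _ ⟨z, hz, rfl⟩
  have hsub : ∀ u : ℕ → X, (∀ n, ‖u n‖ ≤ 1) → ∃ f, ∃ σ : ℕ → ℕ, StrictMono σ ∧
      ∀ φ ∈ ψ '' UnitDisk, Tendsto (fun k => φ (S (u (σ k)))) atTop (𝓝 (φ (S f))) := by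
    intro u hu
    obtain ⟨f, σ, hσ, -, hconv⟩ := hX_ball u hu
    have hTconv := hT_intr _ _ (fun k => hιX_hol _) (hιX_hol f) hconv
    refine ⟨f, σ, hσ, ?_⟩
    rintro - ⟨z, hz, rfl⟩
    simpa only [hψS z hz] using (hTconv.tendsto_at hz).const_mul (v z : ℂ)
  have hset : (fun z => ((v z : ℂ) • (K z).comp S : X →L[ℂ] ℂ)) '' UnitDisk =
      (fun φ => φ.comp S) '' (ψ '' UnitDisk) := by
    rw [Set.image_image]; rfl
  rw [hset]
  refine ⟨fun hcomp => ?_, fun hcomp => ?_⟩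
  · exact (hcomp.totallyBounded_image_comp hbdd).closure.isCompact_of_isClosed isClosed_closure
  · exact isCompactOperator_of_totallyBounded_image_comp hnorming
      (hcomp.totallyBounded.subset subset_closure) hsub

/-- Let `T` be an intrinsic operator, `X` an initial space, and suppose
`T : X → H_v` is bounded (realized by `S : X →L[ℂ] Hv`, where `Hv` is the growth space
`H_v` realized abstractly).  Then `T : X → H_v` is compact iff the set
`{v z • T* K_z : z ∈ 𝔻}` is relatively norm-compact in `X*`. -/
theorem stmt_12 {X Hv : Type*}
    [NormedAddCommGroup X] [NormedSpace ℂ X] [CompleteSpace X]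
    [NormedAddCommGroup Hv] [NormedSpace ℂ Hv] [CompleteSpace Hv]
    (v : ℂ → ℝ)
    (hv_cont : ContinuousOn v UnitDisk)
    (hv_pos : ∀ z ∈ UnitDisk, 0 < v z)
    (hv_le1 : ∀ z ∈ UnitDisk, v z ≤ 1)
    (hv_rad : ∀ z ∈ UnitDisk, ∀ w ∈ UnitDisk, ‖z‖ = ‖w‖ → v z = v w)
    (ιX : X →ₗ[ℂ] (ℂ → ℂ)) (hιX_inj : Function.Injective ιX)
    (hιX_hol : ∀ f : X, DifferentiableOn ℂ (ιX f) UnitDisk)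
    (hX_poly : ∀ q : Polynomial ℂ, ∃ f : X, ∀ z ∈ UnitDisk, ιX f z = q.eval z)
    (hX_ball : ∀ u : ℕ → X, (∀ n, ‖u n‖ ≤ 1) →
      ∃ (f : X) (σ : ℕ → ℕ), StrictMono σ ∧ ‖f‖ ≤ 1 ∧
        TendstoLocallyUniformlyOn (fun k => ιX (u (σ k))) (ιX f) atTop UnitDisk)
    (j : Hv →ₗ[ℂ] (ℂ → ℂ)) (hj_inj : Function.Injective j)
    (hj_hol : ∀ g : Hv, DifferentiableOn ℂ (j g) UnitDisk)
    (hj_le : ∀ (g : Hv), ∀ z ∈ UnitDisk, v z * ‖j g z‖ ≤ ‖g‖)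
    (hj_norm : ∀ (g : Hv) (C : ℝ), 0 ≤ C → (∀ z ∈ UnitDisk, v z * ‖j g z‖ ≤ C) → ‖g‖ ≤ C)
    (hj_surj : ∀ f : ℂ → ℂ, DifferentiableOn ℂ f UnitDisk →
      (∃ C : ℝ, ∀ z ∈ UnitDisk, v z * ‖f z‖ ≤ C) → ∃ g : Hv, ∀ z ∈ UnitDisk, j g z = f z)
    (K : ℂ → (Hv →L[ℂ] ℂ)) (hK : ∀ z ∈ UnitDisk, ∀ g : Hv, K z g = j g z)
    (T : (ℂ → ℂ) →ₗ[ℂ] (ℂ → ℂ))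
    (hT_hol : ∀ f : ℂ → ℂ, DifferentiableOn ℂ f UnitDisk →
      DifferentiableOn ℂ (T f) UnitDisk)
    (hT_intr : ∀ (F : ℕ → (ℂ → ℂ)) (f : ℂ → ℂ),
      (∀ n, DifferentiableOn ℂ (F n) UnitDisk) → DifferentiableOn ℂ f UnitDisk →
      TendstoLocallyUniformlyOn F f atTop UnitDisk →
      TendstoLocallyUniformlyOn (fun n => T (F n)) (T f) atTop UnitDisk)
    (S : X →L[ℂ] Hv) (hS : ∀ f : X, ∀ z ∈ UnitDisk, j (S f) z = T (ιX f) z) :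
    IsCompactOperator S ↔
      IsCompact (closure ((fun z => ((v z : ℂ) • (K z).comp S : X →L[ℂ] ℂ)) '' UnitDisk)) :=
  stmt_12_general v hv_pos ιX hιX_hol hX_ball j hj_le hj_norm K hK T hT_intr S hS
end

section
/- Let X be a reflexive initial space closed under dilations with sup_{0≤r<1}||f_r||_X ≲ ||f||_X, and T an intrinsic operator with Tf_r ∈ H_{v,0} for all f ∈ X, 0 ≤ r < 1. Then T : X → H_v is bounded if and only if T : X → H_{v,0} is bounded. -/
open Metric Filter Topology

/-!
Only `T : X → H_v ⇒ T : X → H_{v,0}` needs proof. Let `S : X → H_v` realise `T` and fix `f ∈ X`.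
The dilates `f_r` are bounded in `X` and `S f_r = T f_r ∈ H_{v,0}`. Since `X` is reflexive, its
balls are weakly compact, so along `r → 1` the dilates have a weak cluster point `w`. The set
`S⁻¹(H_{v,0})` is a closed subspace, hence weakly closed, so `w` lies in it. Point evaluations
are continuous on `X` (by the compactness of its ball for locally uniform convergence), so
`w = lim f_r = f` pointwise on the disk, and `T w = T f` because `T` only sees values on the disk.
-/

open NormedSpace

section Reflexive

variable {𝕜 X : Type*} [RCLike 𝕜] [NormedAddCommGroup X] [NormedSpace 𝕜 X]

theorem isClosed_toWeakSpace_image [NormedSpace ℝ X] [IsScalarTower ℝ 𝕜 X] {s : Set X}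
    (hs : Convex ℝ s) (hsc : IsClosed s) : IsClosed (toWeakSpace 𝕜 X '' s) := by
  have := hs.toWeakSpace_closure 𝕜
  rw [hsc.closure_eq] at this
  exact this ▸ isClosed_closure

/-- Kakutani: via the double dual, the weak topology on the ball is the weak-* one, so
Banach–Alaoglu applies. -/
theorem isCompact_toWeakSpace_closedBall [NormedSpace ℝ X] [IsScalarTower ℝ 𝕜 X]
    (hrefl : Function.Surjective (inclusionInDoubleDual 𝕜 X)) (R : ℝ) :
    IsCompact (toWeakSpace 𝕜 X '' closedBall (0 : X) R) := by
  let e := LinearIsometryEquiv.ofSurjective (inclusionInDoubleDualLi 𝕜) hrefl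
  let g : WeakDual 𝕜 (StrongDual 𝕜 X) → WeakSpace 𝕜 X :=
    fun ξ => toWeakSpace 𝕜 X (e.symm (WeakDual.toStrongDual ξ))
  have hg : Continuous g := by
    refine WeakBilin.continuous_of_continuous_eval _ fun y => ?_
    have hgy : ∀ ξ, (topDualPairing 𝕜 X).flip (g ξ) y = ξ y := fun ξ =>
      congrArg (· y) (e.apply_symm_apply (WeakDual.toStrongDual ξ))
    simpa only [hgy] using WeakDual.eval_continuous y
  refine ((WeakDual.isCompact_closedBall 0 R).image hg).of_isClosed_subset
    (isClosed_toWeakSpace_image (convex_closedBall 0 R) isClosed_closedBall) ?_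
  rintro _ ⟨x, hx, rfl⟩
  refine ⟨WeakDual.toStrongDual.symm (e x), ?_, ?_⟩
  · simpa [e.norm_map] using hx
  · simp [g]

variable {ι : Type*} {l : Filter ι}

theorem exists_weak_mapClusterPt_of_bounded [NormedSpace ℝ X] [IsScalarTower ℝ 𝕜 X] [l.NeBot]
    (hrefl : Function.Surjective (inclusionInDoubleDual 𝕜 X)) {u : ι → X} {R : ℝ}
    (hu : ∀ i, ‖u i‖ ≤ R) :
    ∃ w : X, MapClusterPt (toWeakSpace 𝕜 X w) l (toWeakSpace 𝕜 X ∘ u) := by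
  obtain ⟨w', -, hw'⟩ := (isCompact_toWeakSpace_closedBall hrefl R).exists_mapClusterPt
    (f := l) (u := toWeakSpace 𝕜 X ∘ u) (by
      rw [le_principal_iff, mem_map]
      exact univ_mem' fun i => ⟨u i, mem_closedBall_zero_iff.2 (hu i), rfl⟩)
  exact ⟨(toWeakSpace 𝕜 X).symm w', by simpa using hw'⟩

variable {u : ι → X} {w : X}

theorem eq_of_tendsto_of_weak_mapClusterPt
    (hw : MapClusterPt (toWeakSpace 𝕜 X w) l (toWeakSpace 𝕜 X ∘ u)) (φ : StrongDual 𝕜 X) {L : 𝕜}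
    (hφ : Tendsto (φ ∘ u) l (𝓝 L)) : φ w = L := by
  have hcont : Continuous fun x : WeakSpace 𝕜 X => φ ((toWeakSpace 𝕜 X).symm x) :=
    WeakBilin.eval_continuous (topDualPairing 𝕜 X).flip φ
  have hφw : MapClusterPt (φ w) l (φ ∘ u) := by
    simpa [Function.comp_def] using hw.continuousAt_comp hcont.continuousAt
  exact eq_of_nhds_neBot (hφw.clusterPt.mono hφ)

theorem mem_of_weak_mapClusterPt [NormedSpace ℝ X] [IsScalarTower ℝ 𝕜 X]
    (hw : MapClusterPt (toWeakSpace 𝕜 X w) l (toWeakSpace 𝕜 X ∘ u)) {s : Set X}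
    (hs : Convex ℝ s) (hsc : IsClosed s) (hu : ∀ i, u i ∈ s) : w ∈ s := by
  have hmem : toWeakSpace 𝕜 X w ∈ closure (toWeakSpace 𝕜 X '' s) :=
    hw.clusterPt.mem_closure_of_mem _ (mem_map.2 (univ_mem' fun i => ⟨u i, hu i, rfl⟩))
  rw [(isClosed_toWeakSpace_image hs hsc).closure_eq] at hmem
  simpa using hmem

end Reflexive

theorem LinearMap.exists_bound_of_subseq_tendsto {𝕜 E : Type*} [RCLike 𝕜]
    [NormedAddCommGroup E] [NormedSpace 𝕜 E] (ℓ : E →ₗ[𝕜] 𝕜)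
    (h : ∀ u : ℕ → E, (∀ n, ‖u n‖ ≤ 1) →
      ∃ (σ : ℕ → ℕ) (L : 𝕜), StrictMono σ ∧ Tendsto (ℓ ∘ u ∘ σ) atTop (𝓝 L)) :
    ∃ C, ∀ x, ‖ℓ x‖ ≤ C * ‖x‖ := by
  suffices ∃ c, ∀ x ∈ closedBall (0 : E) 1, ‖ℓ x‖ ≤ c by
    obtain ⟨c, hc⟩ := this
    exact ⟨c, by simpa using ℓ.bound_of_ball_bound' one_pos c hc⟩
  by_contra! hunb
  choose u hu_ball hu_large using fun n : ℕ => hunb n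
  obtain ⟨σ, L, hσ, hL⟩ := h u fun n => mem_closedBall_zero_iff.1 (hu_ball n)
  have hσ_large : Tendsto (fun k => ‖ℓ (u (σ k))‖) atTop atTop :=
    tendsto_atTop_mono (fun k => (hu_large (σ k)).le)
      (tendsto_natCast_atTop_atTop.comp hσ.tendsto_atTop)
  exact not_tendsto_nhds_of_tendsto_atTop hσ_large _ hL.norm

theorem exists_evalCLM_of_subseq_tendstoLocallyUniformlyOn {X : Type*}
    [NormedAddCommGroup X] [NormedSpace ℂ X] (ι : X →ₗ[ℂ] (ℂ → ℂ)) {U : Set ℂ}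
    (hι : ∀ u : ℕ → X, (∀ n, ‖u n‖ ≤ 1) →
      ∃ (f : X) (σ : ℕ → ℕ), StrictMono σ ∧
        TendstoLocallyUniformlyOn (fun k => ι (u (σ k))) (ι f) atTop U)
    {z : ℂ} (hz : z ∈ U) : ∃ φ : StrongDual ℂ X, ∀ x, φ x = ι x z := by
  let ℓ := LinearMap.proj z ∘ₗ ι
  obtain ⟨C, hC⟩ := ℓ.exists_bound_of_subseq_tendsto fun u hu => by
    obtain ⟨f, σ, hσ, hconv⟩ := hι u hu
    exact ⟨σ, ι f z, hσ, hconv.tendsto_at hz⟩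
  exact ⟨ℓ.mkContinuous C hC, fun x => rfl⟩

theorem exists_mem_eqOn_of_tendsto_of_bounded {X : Type*} [NormedAddCommGroup X]
    [NormedSpace ℂ X] (hrefl : Function.Surjective (inclusionInDoubleDual ℂ X))
    (ι : X →ₗ[ℂ] (ℂ → ℂ)) {U : Set ℂ}
    (hι : ∀ u : ℕ → X, (∀ n, ‖u n‖ ≤ 1) →
      ∃ (f : X) (σ : ℕ → ℕ), StrictMono σ ∧
        TendstoLocallyUniformlyOn (fun k => ι (u (σ k))) (ι f) atTop U)
    {u : ℕ → X} {R : ℝ} (hu : ∀ n, ‖u n‖ ≤ R) {s : Set X} (hs : Convex ℝ s) (hsc : IsClosed s)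
    (hus : ∀ n, u n ∈ s) {g : ℂ → ℂ}
    (hg : ∀ z ∈ U, Tendsto (fun n => ι (u n) z) atTop (𝓝 (g z))) :
    ∃ w ∈ s, Set.EqOn (ι w) g U := by
  obtain ⟨w, hw⟩ := exists_weak_mapClusterPt_of_bounded (l := atTop) hrefl hu
  refine ⟨w, mem_of_weak_mapClusterPt hw hs hsc hus, fun z hz => ?_⟩
  obtain ⟨φ, hφ⟩ := exists_evalCLM_of_subseq_tendstoLocallyUniformlyOn ι hι hz
  rw [← hφ]
  exact eq_of_tendsto_of_weak_mapClusterPt hw φ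
    (by simpa only [Function.comp_def, hφ] using hg z hz)

theorem Set.EqOn.map_of_tendstoLocallyUniformlyOn {U : Set ℂ} (T : (ℂ → ℂ) → ℂ → ℂ)
    (hT : ∀ (F : ℕ → ℂ → ℂ) (f : ℂ → ℂ),
      (∀ n, DifferentiableOn ℂ (F n) U) → DifferentiableOn ℂ f U →
      TendstoLocallyUniformlyOn F f atTop U →
      TendstoLocallyUniformlyOn (fun n => T (F n)) (T f) atTop U)
    {f g : ℂ → ℂ} (hf : DifferentiableOn ℂ f U) (hg : DifferentiableOn ℂ g U)
    (hfg : Set.EqOn f g U) : Set.EqOn (T f) (T g) U := by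
  have hconst : TendstoLocallyUniformlyOn (fun _ : ℕ => f) g atTop U :=
    TendstoUniformlyOn.tendstoLocallyUniformlyOn
      (fun _ hu => .of_forall fun _ _ _ => refl_mem_uniformity hu) |>.congr_right hfg
  intro z hz
  exact tendsto_nhds_unique tendsto_const_nhds ((hT _ _ (fun _ => hf) hg hconst).tendsto_at hz)

section TendstoZero

variable (𝕜 : Type*) {α E : Type*} (F : Type*) [NormedField 𝕜] [NormedAddCommGroup E]
  [NormedSpace 𝕜 E] [NormedAddCommGroup F] [NormedSpace 𝕜 F]

def Filter.tendstoZeroSubmodule (l : Filter α) : Submodule 𝕜 (α → F) where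
  carrier := {f | Tendsto f l (𝓝 0)}
  add_mem' hf hg := by rw [← add_zero (0 : F)]; exact hf.add hg
  zero_mem' := tendsto_const_nhds
  smul_mem' c _ hf := by rw [← smul_zero c]; exact hf.const_smul c

variable {𝕜 F} {l : Filter α}

theorem Filter.mem_tendstoZeroSubmodule {f : α → F} :
    f ∈ tendstoZeroSubmodule 𝕜 F l ↔ Tendsto f l (𝓝 0) := Iff.rfl

theorem Filter.isClosed_comap_tendstoZeroSubmodule (A : E →ₗ[𝕜] α → F)
    (hA : ∀ᶠ a in l, ∀ x, ‖A x a‖ ≤ ‖x‖) :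
    IsClosed ((tendstoZeroSubmodule 𝕜 F l).comap A : Set E) := by
  refine isClosed_of_closure_subset fun x hx => ?_
  rw [SetLike.mem_coe, Submodule.mem_comap, mem_tendstoZeroSubmodule,
    tendsto_zero_iff_norm_tendsto_zero, Metric.tendsto_nhds]
  intro ε hε
  obtain ⟨y, hy, hxy⟩ := Metric.mem_closure_iff.1 hx (ε / 2) (half_pos hε)
  rw [SetLike.mem_coe, Submodule.mem_comap, mem_tendstoZeroSubmodule,
    tendsto_zero_iff_norm_tendsto_zero] at hy
  filter_upwards [hA, Metric.tendsto_nhds.1 hy (ε / 2) (half_pos hε)] with a ha hya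
  rw [Real.dist_0_eq_abs, abs_norm] at hya ⊢
  calc ‖A x a‖ = ‖A (x - y) a + A y a‖ := by rw [map_sub, Pi.sub_apply, sub_add_cancel]
    _ ≤ ‖x - y‖ + ‖A y a‖ := (norm_add_le _ _).trans (add_le_add_left (ha _) _)
    _ < ε := by rw [← dist_eq_norm]; linarith

end TendstoZero

section WeightedVanishing

variable {Hv : Type*} [NormedAddCommGroup Hv] [NormedSpace ℂ Hv]

theorem unitDisk_mem_bdryFilter : UnitDisk ∈ bdryFilter :=
  ⟨Set.Iio 1, self_mem_nhdsWithin, fun _ hz => mem_ball_zero_iff.2 hz⟩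

/-- The little weighted space `H_{v,0}` inside `Hv`, realised on the disk through `j`. -/
noncomputable def weightedVanishingSubmodule (v : ℂ → ℝ) (j : Hv →ₗ[ℂ] ℂ → ℂ) : Submodule ℂ Hv :=
  (tendstoZeroSubmodule ℂ ℂ bdryFilter).comap (LinearMap.mulLeft ℂ (fun z => (v z : ℂ)) ∘ₗ j)

variable {v : ℂ → ℝ} {j : Hv →ₗ[ℂ] ℂ → ℂ}

theorem mem_weightedVanishingSubmodule_iff (hv : ∀ z ∈ UnitDisk, 0 ≤ v z) {g : Hv} :
    g ∈ weightedVanishingSubmodule v j ↔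
      Tendsto (fun z => v z * ‖j g z‖) bdryFilter (𝓝 0) := by
  rw [weightedVanishingSubmodule, Submodule.mem_comap, mem_tendstoZeroSubmodule,
    tendsto_zero_iff_norm_tendsto_zero]
  refine tendsto_congr' ?_
  filter_upwards [unitDisk_mem_bdryFilter] with z hz
  simp [Real.norm_of_nonneg (hv z hz)]

theorem isClosed_weightedVanishingSubmodule (hv : ∀ z ∈ UnitDisk, 0 ≤ v z)
    (hj : ∀ g : Hv, ∀ z ∈ UnitDisk, v z * ‖j g z‖ ≤ ‖g‖) :
    IsClosed (weightedVanishingSubmodule v j : Set Hv) := by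
  refine isClosed_comap_tendstoZeroSubmodule _ ?_
  filter_upwards [unitDisk_mem_bdryFilter] with z hz g
  simpa [Real.norm_of_nonneg (hv z hz)] using hj g z hz

end WeightedVanishing

theorem ofReal_mul_mem_unitDisk {r : ℝ} (hr0 : 0 ≤ r) (hr1 : r ≤ 1) {z : ℂ}
    (hz : z ∈ UnitDisk) : (r : ℂ) * z ∈ UnitDisk := by
  rw [UnitDisk, mem_ball_zero_iff] at hz ⊢
  rw [norm_mul, Complex.norm_real, Real.norm_of_nonneg hr0]
  nlinarith [norm_nonneg z]

theorem DifferentiableOn.comp_ofReal_mul_unitDisk {h : ℂ → ℂ}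
    (hh : DifferentiableOn ℂ h UnitDisk) {r : ℝ} (hr0 : 0 ≤ r) (hr1 : r ≤ 1) :
    DifferentiableOn ℂ (fun w => h (r * w)) UnitDisk :=
  hh.comp (differentiable_id.const_mul _).differentiableOn
    fun _ hz => ofReal_mul_mem_unitDisk hr0 hr1 hz

theorem Filter.Tendsto.comp_ofReal_mul {α : Type*} {l : Filter α} {r : α → ℝ}
    (hr : Tendsto r l (𝓝 1)) {h : ℂ → ℂ} {z : ℂ} (hh : ContinuousAt h z) :
    Tendsto (fun a => h (r a * z)) l (𝓝 (h z)) := by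
  refine hh.tendsto.comp ?_
  simpa using ((Complex.continuous_ofReal.tendsto 1).comp hr).mul_const z

theorem stmt_16_general {X Hv : Type*}
    [NormedAddCommGroup X] [NormedSpace ℂ X]
    [NormedAddCommGroup Hv] [NormedSpace ℂ Hv]
    (v : ℂ → ℝ)
    (hv_pos : ∀ z ∈ UnitDisk, 0 < v z)
    (ιX : X →ₗ[ℂ] (ℂ → ℂ))
    (hιX_hol : ∀ f : X, DifferentiableOn ℂ (ιX f) UnitDisk)
    (hX_ball : ∀ u : ℕ → X, (∀ n, ‖u n‖ ≤ 1) →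
      ∃ (f : X) (σ : ℕ → ℕ), StrictMono σ ∧ ‖f‖ ≤ 1 ∧
        TendstoLocallyUniformlyOn (fun k => ιX (u (σ k))) (ιX f) atTop UnitDisk)
    (j : Hv →ₗ[ℂ] (ℂ → ℂ))
    (hj_le : ∀ (g : Hv), ∀ z ∈ UnitDisk, v z * ‖j g z‖ ≤ ‖g‖)
    (T : (ℂ → ℂ) →ₗ[ℂ] (ℂ → ℂ))
    (hT_intr : ∀ (F : ℕ → (ℂ → ℂ)) (f : ℂ → ℂ),
      (∀ n, DifferentiableOn ℂ (F n) UnitDisk) → DifferentiableOn ℂ f UnitDisk →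
      TendstoLocallyUniformlyOn F f atTop UnitDisk →
      TendstoLocallyUniformlyOn (fun n => T (F n)) (T f) atTop UnitDisk)
    (hrefl : Function.Surjective (NormedSpace.inclusionInDoubleDual ℂ X))
    (hdil : ∃ c : ℝ, 0 < c ∧ ∀ (f : X) (r : ℝ), 0 ≤ r → r < 1 →
      ∃ fr : X, (∀ z ∈ UnitDisk, ιX fr z = ιX f ((r : ℂ) * z)) ∧ ‖fr‖ ≤ c * ‖f‖)
    (hTr : ∀ (f : X) (r : ℝ), 0 ≤ r → r < 1 →
      Tendsto (fun z => v z * ‖T (fun w => ιX f ((r : ℂ) * w)) z‖) bdryFilter (nhds 0)) :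
    (∃ S : X →L[ℂ] Hv, ∀ f : X, ∀ z ∈ UnitDisk, j (S f) z = T (ιX f) z) ↔
      (∃ S : X →L[ℂ] Hv, (∀ f : X, ∀ z ∈ UnitDisk, j (S f) z = T (ιX f) z) ∧
        ∀ f : X, Tendsto (fun z => v z * ‖j (S f) z‖) bdryFilter (nhds 0)) := by
  refine ⟨fun ⟨S, hS⟩ => ⟨S, hS, fun f => ?_⟩, fun ⟨S, hS, _⟩ => ⟨S, hS⟩⟩
  have hv : ∀ z ∈ UnitDisk, 0 ≤ v z := fun z hz => (hv_pos z hz).le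
  have hT_local {g h : ℂ → ℂ} (hg : DifferentiableOn ℂ g UnitDisk)
      (hh : DifferentiableOn ℂ h UnitDisk) (hgh : Set.EqOn g h UnitDisk) :
      Set.EqOn (T g) (T h) UnitDisk :=
    Set.EqOn.map_of_tendstoLocallyUniformlyOn T hT_intr hg hh hgh
  let M := weightedVanishingSubmodule v j
  obtain ⟨c, -, hdil⟩ := hdil
  have hr : ∀ n : ℕ, 0 ≤ (n / (n + 1) : ℝ) ∧ (n / (n + 1) : ℝ) < 1 := fun n =>
    ⟨by positivity, (div_lt_one (by positivity)).2 (lt_add_one _)⟩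
  choose u hu_eq hu_norm using fun n => hdil f _ (hr n).1 (hr n).2
  have hu_M : ∀ n, S (u n) ∈ M := fun n => by
    refine (mem_weightedVanishingSubmodule_iff hv).2 <| (hTr f _ (hr n).1 (hr n).2).congr' ?_
    filter_upwards [unitDisk_mem_bdryFilter] with z hz
    rw [hS _ z hz, hT_local ((hιX_hol f).comp_ofReal_mul_unitDisk (hr n).1 (hr n).2.le)
      (hιX_hol (u n)) (fun w hw => (hu_eq n w hw).symm) hz]
  have hM_conv : Convex ℝ (S ⁻¹' M) := ((M.comap S.toLinearMap).restrictScalars ℝ).convex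
  have hM_closed : IsClosed (S ⁻¹' M) :=
    (isClosed_weightedVanishingSubmodule hv hj_le).preimage S.continuous
  have hu_tendsto : ∀ z ∈ UnitDisk, Tendsto (fun n => ιX (u n) z) atTop (𝓝 (ιX f z)) :=
    fun z hz => ((tendsto_natCast_div_add_atTop (1 : ℝ)).comp_ofReal_mul
      ((hιX_hol f).continuousOn.continuousAt (isOpen_ball.mem_nhds hz))).congr
      fun n => (hu_eq n z hz).symm
  obtain ⟨w, hwM, hwf⟩ := exists_mem_eqOn_of_tendsto_of_bounded hrefl ιX
    (fun u hu => let ⟨f, σ, hσ, _, hconv⟩ := hX_ball u hu; ⟨f, σ, hσ, hconv⟩)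
    hu_norm hM_conv hM_closed hu_M hu_tendsto
  refine ((mem_weightedVanishingSubmodule_iff hv (g := S w)).1 hwM).congr' ?_
  filter_upwards [unitDisk_mem_bdryFilter] with z hz
  rw [hS f z hz, hS w z hz, hT_local (hιX_hol w) (hιX_hol f) hwf hz]

/-- Let `X` be a reflexive initial space closed under dilations with
`sup_{0 ≤ r < 1} ‖f_r‖_X ≲ ‖f‖_X`, and `T` an intrinsic operator with `T f_r ∈ H_{v,0}`
for all `f ∈ X`, `0 ≤ r < 1`.  Then `T : X → H_v` is bounded iff `T : X → H_{v,0}` is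
bounded. -/
theorem stmt_16 {X Hv : Type*}
    [NormedAddCommGroup X] [NormedSpace ℂ X] [CompleteSpace X]
    [NormedAddCommGroup Hv] [NormedSpace ℂ Hv] [CompleteSpace Hv]
    (v : ℂ → ℝ)
    (hv_cont : ContinuousOn v UnitDisk)
    (hv_pos : ∀ z ∈ UnitDisk, 0 < v z)
    (hv_le1 : ∀ z ∈ UnitDisk, v z ≤ 1)
    (hv_rad : ∀ z ∈ UnitDisk, ∀ w ∈ UnitDisk, ‖z‖ = ‖w‖ → v z = v w)
    (hv_mono : ∀ z ∈ UnitDisk, ∀ w ∈ UnitDisk, ‖z‖ ≤ ‖w‖ → v w ≤ v z)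
    (hv_lim : Tendsto v bdryFilter (nhds 0))
    (ιX : X →ₗ[ℂ] (ℂ → ℂ)) (hιX_inj : Function.Injective ιX)
    (hιX_hol : ∀ f : X, DifferentiableOn ℂ (ιX f) UnitDisk)
    (hX_poly : ∀ q : Polynomial ℂ, ∃ f : X, ∀ z ∈ UnitDisk, ιX f z = q.eval z)
    (hX_ball : ∀ u : ℕ → X, (∀ n, ‖u n‖ ≤ 1) →
      ∃ (f : X) (σ : ℕ → ℕ), StrictMono σ ∧ ‖f‖ ≤ 1 ∧
        TendstoLocallyUniformlyOn (fun k => ιX (u (σ k))) (ιX f) atTop UnitDisk)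
    (j : Hv →ₗ[ℂ] (ℂ → ℂ)) (hj_inj : Function.Injective j)
    (hj_hol : ∀ g : Hv, DifferentiableOn ℂ (j g) UnitDisk)
    (hj_le : ∀ (g : Hv), ∀ z ∈ UnitDisk, v z * ‖j g z‖ ≤ ‖g‖)
    (hj_norm : ∀ (g : Hv) (C : ℝ), 0 ≤ C → (∀ z ∈ UnitDisk, v z * ‖j g z‖ ≤ C) → ‖g‖ ≤ C)
    (hj_surj : ∀ f : ℂ → ℂ, DifferentiableOn ℂ f UnitDisk →
      (∃ C : ℝ, ∀ z ∈ UnitDisk, v z * ‖f z‖ ≤ C) → ∃ g : Hv, ∀ z ∈ UnitDisk, j g z = f z)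
    (K : ℂ → (Hv →L[ℂ] ℂ)) (hK : ∀ z ∈ UnitDisk, ∀ g : Hv, K z g = j g z)
    (T : (ℂ → ℂ) →ₗ[ℂ] (ℂ → ℂ))
    (hT_hol : ∀ f : ℂ → ℂ, DifferentiableOn ℂ f UnitDisk →
      DifferentiableOn ℂ (T f) UnitDisk)
    (hT_intr : ∀ (F : ℕ → (ℂ → ℂ)) (f : ℂ → ℂ),
      (∀ n, DifferentiableOn ℂ (F n) UnitDisk) → DifferentiableOn ℂ f UnitDisk →
      TendstoLocallyUniformlyOn F f atTop UnitDisk →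
      TendstoLocallyUniformlyOn (fun n => T (F n)) (T f) atTop UnitDisk)
    (hrefl : Function.Surjective (NormedSpace.inclusionInDoubleDual ℂ X))
    (hdil : ∃ c : ℝ, 0 < c ∧ ∀ (f : X) (r : ℝ), 0 ≤ r → r < 1 →
      ∃ fr : X, (∀ z ∈ UnitDisk, ιX fr z = ιX f ((r : ℂ) * z)) ∧ ‖fr‖ ≤ c * ‖f‖)
    (hTr : ∀ (f : X) (r : ℝ), 0 ≤ r → r < 1 →
      Tendsto (fun z => v z * ‖T (fun w => ιX f ((r : ℂ) * w)) z‖) bdryFilter (nhds 0)) :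
    (∃ S : X →L[ℂ] Hv, ∀ f : X, ∀ z ∈ UnitDisk, j (S f) z = T (ιX f) z) ↔
      (∃ S : X →L[ℂ] Hv, (∀ f : X, ∀ z ∈ UnitDisk, j (S f) z = T (ιX f) z) ∧
        ∀ f : X, Tendsto (fun z => v z * ‖j (S f) z‖) bdryFilter (nhds 0)) :=
  stmt_16_general v hv_pos ιX hιX_hol hX_ball j hj_le T hT_intr hrefl hdil hTr
end
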